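/- arXiv:2211.12733 — 3 statements merged into one kernel-verified Lean document; each statement's English description precedes it below -/
import Mathlib

section
/- Let (Θ, 𝔉) be a measurable space, μ a probability measure on Θ, and g : Θ → ℝ a measurable function. Let K ≥ 1 be a natural number and let ε ∈ (0, 1] and η ∈ (0, 1) be real numbers satisfying ε ≥ (2/K)·(ln(1/η) + 1). Then, with respect to the product measure μ^K on Θ^K (modeling K independent samples drawn i.i.d. from μ), the set of sample vectors ω = (ω₁, …, ω_K) ∈ Θ^K for which μ({θ ∈ Θ : g(θ) > max_{1≤i≤K} g(ω_i)}) ≤ ε has μ^K-measure at least 1 − η. -/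
/-!
Let `F x = μ {g > x}`, an antitone function. If more than `ε` of the mass lies above the sample
maximum, the same holds above every sample point, so all `K` samples fall in
`S = g⁻¹' {x | ε < F x}`, an event of probability at most `μ S ^ K`. For `x` with `ε < F x`,
`μ {g ≤ x} = 1 - F x ≤ 1 - ε`; inner regularity of the law of `g` carries this bound from the
half-lines `Iic x` to `S` itself, so `μ S ≤ 1 - ε`. Finally `(1 - ε) ^ K ≤ exp (-K ε) ≤ η`.
-/

open MeasureTheory Set
open scoped ENNReal

/-- A compact subset of `T` lies below its greatest element, which is in `T`. -/
theorem MeasurableSet.measure_le_of_forall_measure_Iic_le {α : Type*} [LinearOrder α]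
    [TopologicalSpace α] [ClosedIciTopology α] [MeasurableSpace α] {ν : Measure α}
    [ν.InnerRegular] {T : Set α} (hT : MeasurableSet T) {b : ℝ≥0∞}
    (hb : ∀ x ∈ T, ν (Iic x) ≤ b) : ν T ≤ b := by
  rw [hT.measure_eq_iSup_isCompact]
  refine iSup₂_le fun C hCT => iSup_le fun hC => ?_
  rcases C.eq_empty_or_nonempty with rfl | hC_ne
  · simp
  obtain ⟨c, hcC, hc⟩ := hC.exists_isGreatest hC_ne
  exact (measure_mono fun x hx => hc hx).trans (hb c (hCT hcC))

theorem measure_setOf_lt_measure_tail_le_one_sub {Θ : Type*} [MeasurableSpace Θ]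
    (μ : Measure Θ) [IsProbabilityMeasure μ] {g : Θ → ℝ} (hg : Measurable g) (ε : ℝ≥0∞) :
    μ {θ | ε < μ {θ' | g θ < g θ'}} ≤ 1 - ε := by
  set F : ℝ → ℝ≥0∞ := fun x => μ {θ' | x < g θ'}
  have hF : Antitone F := fun a b hab => measure_mono fun θ hθ => hab.trans_lt hθ
  have hT : MeasurableSet {x | ε < F x} := measurableSet_lt measurable_const hF.measurable
  change μ (g ⁻¹' {x | ε < F x}) ≤ 1 - ε
  rw [← Measure.map_apply hg hT]
  refine hT.measure_le_of_forall_measure_Iic_le fun x hx => ?_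
  have hcompl : g ⁻¹' Iic x = {θ' | x < g θ'}ᶜ := by
    ext θ'
    simp
  rw [Measure.map_apply hg measurableSet_Iic, hcompl,
    prob_compl_eq_one_sub (measurableSet_lt measurable_const hg)]
  exact tsub_le_tsub_left hx.le 1

theorem measure_pi_setOf_lt_measure_tail_iSup_le {Θ ι : Type*} [MeasurableSpace Θ]
    [Fintype ι] (μ : Measure Θ) [IsProbabilityMeasure μ] {g : Θ → ℝ} (hg : Measurable g)
    (ε : ℝ≥0∞) :
    (Measure.pi fun _ : ι => μ) {ω | ε < μ {θ | ⨆ i, g (ω i) < g θ}}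
      ≤ (1 - ε) ^ Fintype.card ι := by
  have hsub : {ω : ι → Θ | ε < μ {θ | ⨆ i, g (ω i) < g θ}}
      ⊆ univ.pi fun _ => {θ | ε < μ {θ' | g θ < g θ'}} := by
    intro ω (hω : ε < _) i _
    refine hω.trans_le (measure_mono fun θ (hθ : _ < g θ) => lt_of_le_of_lt ?_ hθ)
    exact le_ciSup (f := fun j => g (ω j)) (finite_range _).bddAbove i
  calc _ ≤ _ := measure_mono hsub
    _ = μ {θ | ε < μ {θ' | g θ < g θ'}} ^ Fintype.card ι := by
      rw [Measure.pi_pi, Finset.prod_const, Finset.card_univ]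
    _ ≤ (1 - ε) ^ Fintype.card ι := by
      gcongr
      exact measure_setOf_lt_measure_tail_le_one_sub μ hg ε

theorem one_sub_pow_le_of_log_one_div_le {ε η : ℝ} {K : ℕ} (hε : ε ≤ 1) (hη : 0 < η)
    (h : Real.log (1 / η) ≤ K * ε) : (1 - ε) ^ K ≤ η :=
  calc (1 - ε) ^ K ≤ Real.exp (-ε) ^ K :=
        pow_le_pow_left₀ (by linarith) (Real.one_sub_le_exp_neg ε) K
    _ = Real.exp (-(K * ε)) := by rw [← Real.exp_nat_mul, mul_neg]
    _ ≤ Real.exp (Real.log η) := by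
        rw [Real.exp_le_exp]
        rw [one_div, Real.log_inv] at h
        linarith
    _ = η := Real.exp_log hη

/-- Scenario optimization guarantee (Lemma 1): if `ε ≥ (2/K)·(ln(1/η) + 1)`, then with
confidence at least `1 - η` over `K` i.i.d. samples from `μ`, the probability that `g`
exceeds the empirical maximum is at most `ε`. -/
theorem scenario_optimization_guarantee
    {Θ : Type*} [MeasurableSpace Θ] (μ : Measure Θ) [IsProbabilityMeasure μ]
    (g : Θ → ℝ) (hg : Measurable g)
    (K : ℕ) (hK : 1 ≤ K) (ε η : ℝ)
    (hε : ε ∈ Set.Ioc (0 : ℝ) 1) (hη : η ∈ Set.Ioo (0 : ℝ) 1)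
    (hcond : ε ≥ (2 / K) * (Real.log (1 / η) + 1)) :
    (Measure.pi fun _ : Fin K => μ)
      {ω : Fin K → Θ |
        μ {θ : Θ | g θ > ⨆ i : Fin K, g (ω i)} ≤ ENNReal.ofReal ε}
      ≥ 1 - ENNReal.ofReal η := by
  obtain ⟨hε0, hε1⟩ := hε
  obtain ⟨hη0, hη1⟩ := hη
  have hlog : Real.log (1 / η) ≤ K * ε := by
    have hlog_pos : 0 < Real.log (1 / η) := Real.log_pos (by rw [lt_div_iff₀ hη0]; linarith)
    have hK_pos : (0 : ℝ) < K := by exact_mod_cast hK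
    rw [ge_iff_le, div_mul_eq_mul_div, div_le_iff₀ hK_pos] at hcond
    linarith
  have hbad : (Measure.pi fun _ : Fin K => μ)
      {ω | ENNReal.ofReal ε < μ {θ | ⨆ i, g (ω i) < g θ}} ≤ ENNReal.ofReal η := by
    calc _ ≤ (1 - ENNReal.ofReal ε) ^ K := by
          simpa using measure_pi_setOf_lt_measure_tail_iSup_le (ι := Fin K) μ hg _
      _ = ENNReal.ofReal ((1 - ε) ^ K) := by
          rw [ENNReal.ofReal_pow (by linarith), ENNReal.ofReal_sub _ hε0.le, ENNReal.ofReal_one]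
      _ ≤ ENNReal.ofReal η :=
          ENNReal.ofReal_le_ofReal (one_sub_pow_le_of_log_one_div_le hε1 hη0 hlog)
  have hcover := measure_univ_le_add_compl (μ := Measure.pi fun _ : Fin K => μ)
    {ω : Fin K → Θ | μ {θ : Θ | g θ > ⨆ i : Fin K, g (ω i)} ≤ ENNReal.ofReal ε}
  rw [measure_univ] at hcover
  refine tsub_le_iff_right.mpr (hcover.trans ?_)
  gcongr
  refine le_trans (measure_mono fun ω hω => ?_) hbad
  simpa using hω
end

section
/- Let (Θ, 𝔉) be a measurable space, μ a probability measure on Θ, and g : Θ → ℝ a measurable function. Let K ≥ 1 be a natural number and ε ∈ (0, 1] a real number. Then the μ^K-measure of the set of sample vectors ω = (ω₁, …, ω_K) ∈ Θ^K for which μ({θ ∈ Θ : g(θ) > max_{1≤i≤K} g(ω_i)}) > ε is at most (1 − ε)^K. -/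
/-!
A sample vector is bad (its maximum has violation probability `> ε`) only if each of its
samples `θ = ωᵢ` has upper tail `μ {g > g θ} ≥ ε`, so the bad set lies in the `K`-fold product
of `A = {θ | ε ≤ μ {g > g θ}}` and it suffices to show `μ A ≤ 1 - ε`. Under the pushforward
`ν = g₊μ`, `A` becomes a set `U ⊆ ℝ` on which `ν (Ioi t) ≥ ε`. By inner regularity only compact
`L ⊆ U` matter, and such `L` lies below its own maximum `t ∈ U`, whence
`ν L ≤ ν (Iic t) = 1 - ν (Ioi t) ≤ 1 - ε`.
-/

open MeasureTheory Set
open scoped ENNReal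

theorem measure_le_sub_of_le_measure_Ioi {α : Type*} [LinearOrder α] [TopologicalSpace α]
    [OrderClosedTopology α] [MeasurableSpace α] [OpensMeasurableSpace α]
    (ν : Measure α) [IsFiniteMeasure ν] [ν.InnerRegular] {U : Set α} (hU : MeasurableSet U)
    {c : ℝ≥0∞} (hc : ∀ t ∈ U, c ≤ ν (Ioi t)) :
    ν U ≤ ν univ - c := by
  rw [hU.measure_eq_iSup_isCompact]
  refine iSup₂_le fun L hLU => iSup_le fun hL => ?_
  obtain rfl | hne := L.eq_empty_or_nonempty
  · simp
  obtain ⟨t, htL, hLt⟩ := hL.exists_isGreatest hne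
  calc ν L ≤ ν (Iic t) := measure_mono hLt
    _ = ν univ - ν (Ioi t) := by
      rw [← compl_Ioi, measure_compl measurableSet_Ioi (measure_ne_top ν _)]
    _ ≤ ν univ - c := tsub_le_tsub_left (hc t (hLU htL)) _

theorem measure_setOf_le_measure_lt_le_sub {Θ : Type*} [MeasurableSpace Θ] (μ : Measure Θ)
    [IsFiniteMeasure μ] {g : Θ → ℝ} (hg : Measurable g) (c : ℝ≥0∞) :
    μ {θ | c ≤ μ {x | g θ < g x}} ≤ μ univ - c := by
  set ν := μ.map g
  have hν : ∀ t, ν (Ioi t) = μ {x | t < g x} := fun t => Measure.map_apply hg measurableSet_Ioi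
  have hU : MeasurableSet {t : ℝ | c ≤ ν (Ioi t)} :=
    measurableSet_le measurable_const
      (Antitone.measurable fun s t hst => measure_mono (Ioi_subset_Ioi hst))
  have := measure_le_sub_of_le_measure_Ioi ν hU fun t ht => ht
  rw [Measure.map_apply hg hU, Measure.map_apply hg .univ, preimage_univ] at this
  simpa only [preimage_ofPred_eq, hν] using this

theorem scenario_violation_bound_general
    {Θ : Type*} [MeasurableSpace Θ] (μ : Measure Θ) [IsProbabilityMeasure μ]
    (g : Θ → ℝ) (hg : Measurable g)
    (K : ℕ) (ε : ℝ) (hε : ε ∈ Set.Ioc (0 : ℝ) 1) :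
    (Measure.pi fun _ : Fin K => μ)
      {ω : Fin K → Θ |
        μ {θ : Θ | g θ > ⨆ i : Fin K, g (ω i)} > ENNReal.ofReal ε}
      ≤ ENNReal.ofReal ((1 - ε) ^ K) := by
  set A := {θ | ENNReal.ofReal ε ≤ μ {x | g θ < g x}}
  have hbad : {ω : Fin K → Θ | μ {θ | g θ > ⨆ i, g (ω i)} > ENNReal.ofReal ε} ⊆
      univ.pi fun _ => A := fun ω hω i _ =>
    hω.le.trans <| measure_mono fun x hx =>
      (le_ciSup (finite_range fun j => g (ω j)).bddAbove i).trans_lt hx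
  have hA : μ A ≤ ENNReal.ofReal (1 - ε) := by
    rw [ENNReal.ofReal_sub _ hε.1.le, ENNReal.ofReal_one, ← measure_univ (μ := μ)]
    exact measure_setOf_le_measure_lt_le_sub μ hg _
  calc _ ≤ _ := measure_mono hbad
    _ = μ A ^ K := by simp [Measure.pi_pi]
    _ ≤ ENNReal.ofReal (1 - ε) ^ K := by gcongr
    _ = _ := (ENNReal.ofReal_pow (sub_nonneg.2 hε.2) K).symm

/-- Quantitative core of the scenario optimization guarantee: the probability (over `K`
i.i.d. samples from `μ`) that the violation probability of the empirical maximum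
`λ* = max_{1≤i≤K} g(ωᵢ)` exceeds `ε` is at most `(1 - ε)^K`. -/
theorem scenario_violation_bound
    {Θ : Type*} [MeasurableSpace Θ] (μ : Measure Θ) [IsProbabilityMeasure μ]
    (g : Θ → ℝ) (hg : Measurable g)
    (K : ℕ) (hK : 1 ≤ K) (ε : ℝ) (hε : ε ∈ Set.Ioc (0 : ℝ) 1) :
    (Measure.pi fun _ : Fin K => μ)
      {ω : Fin K → Θ |
        μ {θ : Θ | g θ > ⨆ i : Fin K, g (ω i)} > ENNReal.ofReal ε}
      ≤ ENNReal.ofReal ((1 - ε) ^ K) :=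
  scenario_violation_bound_general μ g hg K ε hε
end

section
/- Let (Θ, 𝔉) be a measurable space, μ a probability measure on Θ, f, ρ : Θ → ℝ measurable functions, and λ*, τ, ε ∈ ℝ. Assume (i) μ({θ ∈ Θ : |f(θ) − ρ(θ)| > λ*}) ≤ ε, and (ii) f(θ) − λ* ≥ τ for every θ ∈ Θ. Then μ({θ ∈ Θ : ρ(θ) ≥ τ}) ≥ 1 − ε. -/
open MeasureTheory

/-- If the absolute distance between the surrogate `f` and the fitness function `ρ`
exceeds `λ*` with probability at most `ε`, and the verified surrogate lower bound
`f(θ) − λ*` meets the safety threshold `τ` everywhere, then the original system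
satisfies the safety property `ρ(θ) ≥ τ` with probability at least `1 − ε`. -/
theorem surrogate_safety_transfer
    {Θ : Type*} [MeasurableSpace Θ] (μ : Measure Θ) [IsProbabilityMeasure μ]
    (f ρ : Θ → ℝ) (hf : Measurable f) (hρ : Measurable ρ)
    (lamStar τ ε : ℝ)
    (h1 : μ {θ : Θ | |f θ - ρ θ| > lamStar} ≤ ENNReal.ofReal ε)
    (h2 : ∀ θ : Θ, f θ - lamStar ≥ τ) :
    μ {θ : Θ | ρ θ ≥ τ} ≥ 1 - ENNReal.ofReal ε := by
  have hsub : {θ : Θ | ρ θ ≥ τ}ᶜ ⊆ {θ : Θ | |f θ - ρ θ| > lamStar} := by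
    intro θ hθ
    simp only [Set.mem_compl_iff, Set.mem_setOf_eq, not_le] at hθ ⊢
    have := h2 θ
    calc lamStar < f θ - ρ θ := by linarith
      _ ≤ |f θ - ρ θ| := le_abs_self _
  have hmeas : MeasurableSet {θ : Θ | ρ θ ≥ τ} :=
    measurableSet_le measurable_const hρ
  have hc : μ {θ : Θ | ρ θ ≥ τ}ᶜ ≤ ENNReal.ofReal ε :=
    le_trans (measure_mono hsub) h1
  have := prob_compl_eq_one_sub hmeas (μ := μ)
  -- μ Sᶜ = 1 - μ S
  have h1le : μ {θ : Θ | ρ θ ≥ τ} ≤ 1 := prob_le_one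
  rw [this] at hc
  have := tsub_le_iff_tsub_le.mp hc
  exact this
end
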